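/- Let N ≥ 1, a ≥ 0 and let (E_x)_{x∈V_N} be nonnegative real numbers, with associated generator matrix L. For t > 0, define the Green function G^t(y,y) = ∫_0^{+∞} e^{−s/t} (exp(sL))(y,y) ds. Then for every y ∈ V_N and every t > 0, G^t(y,y) ≤ t·2^{−N} + t/(1+2t); in particular G^t(y,y) ≤ 1 whenever t·2^{−N} ≤ 1/2. -/

import Mathlib

open MeasureTheory ProbabilityTheory Filter

/-- `x ∼ y`: the vertices `x, y` of the hypercube `V_N = {0,1}^N` differ in exactly
one coordinate. -/
def nbr {N : ℕ} (x y : Fin N → Bool) : Prop :=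
  (Finset.univ.filter fun i => x i ≠ y i).card = 1

instance {N : ℕ} (x y : Fin N → Bool) : Decidable (nbr x y) :=
  inferInstanceAs (Decidable (_ = 1))

/-- The generator matrix `L` of the walk with jump rates `ω(x,y) = e^{a(E_x+E_y)}`. -/
noncomputable def gen (N : ℕ) (a : ℝ) (E : (Fin N → Bool) → ℝ) :
    Matrix (Fin N → Bool) (Fin N → Bool) ℝ := fun x y =>
  if x = y then -(∑ z, if nbr x z then Real.exp (a * (E x + E z)) else 0)
  else if nbr x y then Real.exp (a * (E x + E y)) else 0

/-!
The generator `L` is the weighted Laplacian of the hypercube with all rates `≥ 1`, so its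
Dirichlet form dominates that of the simple random walk, whose spectral gap is `2` (a Poincaré
inequality, proved by induction on `N` by splitting the cube along its first coordinate). Hence
each eigenvalue of the symmetric matrix `L` is either `0`, with a constant eigenvector, or
`≤ -2`. Expanding `exp (s L) y y` in an orthonormal eigenbasis gives
`exp (s L) y y ≤ 2⁻ᴺ + e^{-2s}`, and integrating against `e^{-s/t}` gives the bound.
-/

open Matrix

section SpectralGap

variable {ι : Type*} [Fintype ι] {A : Matrix ι ι ℝ}

theorem Matrix.IsHermitian.sum_mulVec_eq_zero (hA : A.IsHermitian) (h1 : A *ᵥ 1 = 0)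
    (v : ι → ℝ) : ∑ x, (A *ᵥ v) x = 0 := by
  rw [← one_dotProduct, dotProduct_mulVec, ← mulVec_transpose,
    (isHermitian_iff_isSymm.1 hA).eq, h1, zero_dotProduct]

theorem eigenvalue_le_or_eq_zero_of_gap (hA : A.IsHermitian) (h1 : A *ᵥ 1 = 0) {γ : ℝ}
    (hγ : 0 < γ) (hgap : ∀ w : ι → ℝ, ∑ x, w x = 0 → γ * ∑ x, w x ^ 2 ≤ -(w ⬝ᵥ A *ᵥ w))
    {μ : ℝ} {v : ι → ℝ} (hv : A *ᵥ v = μ • v) (hnorm : ∑ x, v x ^ 2 = 1) :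
    μ ≤ -γ ∨ μ = 0 ∧ ∀ x, v x = (∑ z, v z) / Fintype.card ι := by
  by_cases hμ : μ = 0
  · refine Or.inr ⟨hμ, fun y => ?_⟩
    have : Nonempty ι := ⟨y⟩
    have hn : (Fintype.card ι : ℝ) ≠ 0 := Nat.cast_ne_zero.2 Fintype.card_ne_zero
    set w : ι → ℝ := v - ((∑ z, v z) / Fintype.card ι) • 1
    have hw : ∑ x, w x = 0 := by
      simp only [w, Pi.sub_apply, Pi.smul_apply, Pi.one_apply, smul_eq_mul, mul_one,
        Finset.sum_sub_distrib, Finset.sum_const, Finset.card_univ, nsmul_eq_mul]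
      field_simp
      ring
    have hAw : A *ᵥ w = 0 := by
      simp [w, mulVec_sub, mulVec_smul, h1, hv, hμ]
    have hw2 : ∑ x, w x ^ 2 = 0 :=
      le_antisymm (nonpos_of_mul_nonpos_right (by simpa [hAw] using hgap w hw) hγ)
        (by positivity)
    have hwy := (Finset.sum_eq_zero_iff_of_nonneg fun _ _ => sq_nonneg _).1 hw2 y
      (Finset.mem_univ y)
    simpa [w, sub_eq_zero] using hwy
  · left
    have hv0 : ∑ x, v x = 0 := by
      have h := hA.sum_mulVec_eq_zero h1 v
      simp only [hv, Pi.smul_apply, smul_eq_mul, ← Finset.mul_sum] at h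
      exact (mul_eq_zero.1 h).resolve_left hμ
    have hvv : v ⬝ᵥ v = 1 := by simpa [dotProduct, sq] using hnorm
    have h := hgap v hv0
    rw [hv, dotProduct_smul, hvv, hnorm, smul_eq_mul] at h
    linarith

variable [DecidableEq ι] (hA : A.IsHermitian)
include hA

namespace Matrix.IsHermitian

theorem sum_eigenvectorBasis_mul_eigenvectorBasis (y z : ι) :
    ∑ i, hA.eigenvectorBasis i y * hA.eigenvectorBasis i z = if y = z then 1 else 0 := by
  have h := congrFun₂ (Unitary.coe_mul_star_self hA.eigenvectorUnitary) y z
  simpa [Matrix.mul_apply, Matrix.one_apply] using h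

theorem sum_eigenvectorBasis_sq (i : ι) : ∑ x, hA.eigenvectorBasis i x ^ 2 = 1 := by
  have h := congrFun₂ (Unitary.coe_star_mul_self hA.eigenvectorUnitary) i i
  simpa [Matrix.mul_apply, sq] using h

theorem sum_sq_sum_eigenvectorBasis :
    ∑ i, (∑ x, hA.eigenvectorBasis i x) ^ 2 = Fintype.card ι := by
  calc ∑ i, (∑ x, hA.eigenvectorBasis i x) ^ 2
      = ∑ x, ∑ z, ∑ i, hA.eigenvectorBasis i x * hA.eigenvectorBasis i z := by
        simp only [sq, Finset.sum_mul_sum]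
        rw [Finset.sum_comm]
        exact Finset.sum_congr rfl fun x _ => Finset.sum_comm
    _ = Fintype.card ι := by
        simp [hA.sum_eigenvectorBasis_mul_eigenvectorBasis]

theorem exp_smul_apply_self (s : ℝ) (y : ι) :
    NormedSpace.exp (s • A) y y =
      ∑ i, Real.exp (s * hA.eigenvalues i) * hA.eigenvectorBasis i y ^ 2 := by
  set U : Matrix ι ι ℝ := (hA.eigenvectorUnitary : Matrix ι ι ℝ)
  have hUinv : U⁻¹ = star U := Matrix.inv_eq_right_inv (Unitary.coe_mul_star_self _)
  have hsA : s • A = U * diagonal (s • hA.eigenvalues) * U⁻¹ := by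
    conv_lhs => rw [hA.spectral_theorem]
    rw [hUinv, diagonal_smul, Matrix.mul_smul, Matrix.smul_mul]
    rfl
  rw [hsA, Matrix.exp_conj U _ Unitary.isUnit_coe, Matrix.exp_diagonal, hUinv, Matrix.mul_apply]
  refine Finset.sum_congr rfl fun i _ => ?_
  simp [U, Matrix.mul_diagonal, Pi.exp_def, Real.exp_eq_exp_ℝ, sq]
  ring

theorem exp_smul_apply_self_nonneg (s : ℝ) (y : ι) : 0 ≤ NormedSpace.exp (s • A) y y := by
  rw [hA.exp_smul_apply_self]
  exact Finset.sum_nonneg fun i _ => by positivity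

theorem exp_smul_apply_self_le_of_gap (h1 : A *ᵥ 1 = 0) {γ : ℝ} (hγ : 0 < γ)
    (hgap : ∀ w : ι → ℝ, ∑ x, w x = 0 → γ * ∑ x, w x ^ 2 ≤ -(w ⬝ᵥ A *ᵥ w))
    {s : ℝ} (hs : 0 ≤ s) (y : ι) :
    NormedSpace.exp (s • A) y y ≤ 1 / Fintype.card ι + Real.exp (-(γ * s)) := by
  have : Nonempty ι := ⟨y⟩
  set e := hA.eigenvectorBasis
  set n : ℝ := (Fintype.card ι : ℝ)
  have hn : n ≠ 0 := Nat.cast_ne_zero.2 Fintype.card_ne_zero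
  -- A zero mode is constant, so `e i y` is the mean of `e i`; the means' squares sum to `1 / n`.
  have hterm : ∀ i, Real.exp (s * hA.eigenvalues i) * e i y ^ 2
      ≤ Real.exp (-(γ * s)) * e i y ^ 2 + ((∑ x, e i x) / n) ^ 2 := by
    intro i
    rcases eigenvalue_le_or_eq_zero_of_gap hA h1 hγ hgap (hA.mulVec_eigenvectorBasis i)
      (hA.sum_eigenvectorBasis_sq i) with hle | ⟨hzero, hconst⟩
    · have : Real.exp (s * hA.eigenvalues i) ≤ Real.exp (-(γ * s)) :=
        Real.exp_le_exp.2 (by nlinarith)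
      nlinarith [sq_nonneg (e i y), sq_nonneg ((∑ x, e i x) / n)]
    · rw [hzero, mul_zero, Real.exp_zero, one_mul, ← hconst y]
      nlinarith [Real.exp_pos (-(γ * s)), sq_nonneg (e i y)]
  calc NormedSpace.exp (s • A) y y
      ≤ ∑ i, (Real.exp (-(γ * s)) * e i y ^ 2 + ((∑ x, e i x) / n) ^ 2) := by
        rw [hA.exp_smul_apply_self]
        exact Finset.sum_le_sum fun i _ => hterm i
    _ = 1 / n + Real.exp (-(γ * s)) := by
        have hrow : ∑ i, e i y ^ 2 = 1 := by
          simpa [sq] using hA.sum_eigenvectorBasis_mul_eigenvectorBasis y y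
        have hcol : ∑ i, (∑ x, e i x) ^ 2 = n := hA.sum_sq_sum_eigenvectorBasis
        simp only [Finset.sum_add_distrib, ← Finset.mul_sum, div_pow, ← Finset.sum_div, hrow,
          hcol]
        field_simp
        ring

end Matrix.IsHermitian

end SpectralGap

section Laplacian

variable {ι : Type*} [Fintype ι] [DecidableEq ι]

def weightedLaplacian (c : ι → ι → ℝ) : Matrix ι ι ℝ :=
  of c - diagonal fun x => ∑ z, c x z

theorem weightedLaplacian_mulVec_one (c : ι → ι → ℝ) : weightedLaplacian c *ᵥ 1 = 0 := by
  ext x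
  rw [weightedLaplacian, sub_mulVec, Pi.sub_apply, mulVec_diagonal]
  simp [mulVec, dotProduct]

variable {c : ι → ι → ℝ} (hc : ∀ x z, c x z = c z x)
include hc

theorem isHermitian_weightedLaplacian : (weightedLaplacian c).IsHermitian := by
  refine isHermitian_iff_isSymm.2 (IsSymm.ext fun x z => ?_)
  by_cases h : x = z
  · subst h; rfl
  · simp [weightedLaplacian, diagonal_apply_ne _ h, diagonal_apply_ne _ (Ne.symm h), hc x z]

theorem neg_dotProduct_weightedLaplacian_mulVec (v : ι → ℝ) :
    -(v ⬝ᵥ weightedLaplacian c *ᵥ v) = (∑ x, ∑ z, c x z * (v x - v z) ^ 2) / 2 := by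
  have hswap : ∑ x, ∑ z, c x z * v z ^ 2 = ∑ x, ∑ z, c x z * v x ^ 2 := by
    rw [Finset.sum_comm]
    simp only [hc]
  have hexpand : ∑ x, ∑ z, c x z * (v x - v z) ^ 2 =
      ∑ x, ∑ z, c x z * v x ^ 2 + ∑ x, ∑ z, c x z * v z ^ 2
        - 2 * ∑ x, ∑ z, v x * c x z * v z := by
    simp only [Finset.mul_sum, ← Finset.sum_add_distrib, ← Finset.sum_sub_distrib]
    exact Finset.sum_congr rfl fun x _ => Finset.sum_congr rfl fun z _ => by ring
  have hoff : v ⬝ᵥ (of c *ᵥ v) = ∑ x, ∑ z, v x * c x z * v z := by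
    simp [dotProduct, mulVec, Finset.mul_sum, mul_assoc]
  have hdiag : v ⬝ᵥ (diagonal (fun x => ∑ z, c x z) *ᵥ v) = ∑ x, ∑ z, c x z * v x ^ 2 := by
    simp only [dotProduct, mulVec_diagonal, Finset.sum_mul, Finset.mul_sum]
    exact Finset.sum_congr rfl fun x _ => Finset.sum_congr rfl fun z _ => by ring
  rw [hexpand, hswap, weightedLaplacian, sub_mulVec, dotProduct_sub, hoff, hdiag]
  ring

end Laplacian

section Hypercube

variable {N : ℕ}

theorem nbr_comm {x y : Fin N → Bool} : nbr x y ↔ nbr y x := by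
  simp only [nbr, ne_comm]

theorem not_nbr_self (x : Fin N → Bool) : ¬ nbr x x := by
  simp [nbr]

theorem card_filter_cons_ne (b c : Bool) (x z : Fin N → Bool) :
    (Finset.univ.filter fun i => (Fin.cons b x : Fin (N + 1) → Bool) i ≠
        (Fin.cons c z : Fin (N + 1) → Bool) i).card
      = (if b = c then 0 else 1) + (Finset.univ.filter fun i => x i ≠ z i).card := by
  simp only [Finset.card_filter, Fin.sum_univ_succ, Fin.cons_zero, Fin.cons_succ, ne_eq,
    ite_not]

theorem nbr_cons_iff (b c : Bool) (x z : Fin N → Bool) :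
    nbr (Fin.cons b x : Fin (N + 1) → Bool) (Fin.cons c z) ↔
      b = c ∧ nbr x z ∨ b ≠ c ∧ x = z := by
  rw [nbr, card_filter_cons_ne]
  by_cases hbc : b = c
  · simp [hbc, nbr]
  · simp only [hbc, if_false, false_and, ne_eq, not_false_eq_true, true_and, false_or]
    rw [add_eq_left, Finset.card_eq_zero, Finset.filter_eq_empty_iff]
    simp [funext_iff]

theorem sum_fin_cons {M : Type*} [AddCommMonoid M] (g : (Fin (N + 1) → Bool) → M) :
    ∑ x, g x = ∑ z, g (Fin.cons false z) + ∑ z, g (Fin.cons true z) := by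
  rw [← (Fin.consEquiv fun _ => Bool).sum_comp, Fintype.sum_prod_type, Fintype.sum_bool,
    add_comm]
  rfl

theorem sum_nbr_cons (g : (Fin (N + 1) → Bool) → ℝ) (b : Bool) (x : Fin N → Bool) :
    (∑ z, if nbr (Fin.cons b x : Fin (N + 1) → Bool) z then g z else 0) =
      (∑ z, if nbr x z then g (Fin.cons b z) else 0) + g (Fin.cons (!b) x) := by
  rw [sum_fin_cons]
  cases b <;> simp [nbr_cons_iff, add_comm]

def cubeEnergy (f : (Fin N → Bool) → ℝ) : ℝ :=
  ∑ x, ∑ z, if nbr x z then (f x - f z) ^ 2 else 0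

theorem cubeEnergy_succ (f : (Fin (N + 1) → Bool) → ℝ) :
    cubeEnergy f = cubeEnergy (fun z => f (Fin.cons false z)) +
      cubeEnergy (fun z => f (Fin.cons true z)) +
        2 * ∑ z, (f (Fin.cons false z) - f (Fin.cons true z)) ^ 2 := by
  simp only [cubeEnergy]
  rw [sum_fin_cons]
  simp only [sum_nbr_cons (fun z => (f _ - f z) ^ 2), Finset.sum_add_distrib, Bool.not_false,
    Bool.not_true]
  have : ∀ z : Fin N → Bool, (f (Fin.cons true z) - f (Fin.cons false z)) ^ 2
      = (f (Fin.cons false z) - f (Fin.cons true z)) ^ 2 := fun z => by ring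
  simp only [this]
  ring

theorem cube_poincare (f : (Fin N → Bool) → ℝ) :
    4 * (2 ^ N * ∑ x, f x ^ 2 - (∑ x, f x) ^ 2) ≤ 2 ^ N * cubeEnergy f := by
  induction N with
  | zero => simp [cubeEnergy, nbr]
  | succ N ih =>
    set f₀ : (Fin N → Bool) → ℝ := fun z => f (Fin.cons false z)
    set f₁ : (Fin N → Bool) → ℝ := fun z => f (Fin.cons true z)
    have hcs : (∑ z, f₀ z - ∑ z, f₁ z) ^ 2 ≤ 2 ^ N * ∑ z, (f₀ z - f₁ z) ^ 2 := by
      simpa [Finset.sum_sub_distrib] using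
        sq_sum_le_card_mul_sum_sq (s := Finset.univ) (f := fun z => f₀ z - f₁ z)
    rw [sum_fin_cons f, sum_fin_cons (f · ^ 2), cubeEnergy_succ, pow_succ]
    -- twice the induction hypotheses for `f₀`, `f₁`, plus `hcs`
    nlinarith [ih f₀, ih f₁]

end Hypercube

section Generator

variable {N : ℕ} {a : ℝ} {E : (Fin N → Bool) → ℝ}

noncomputable def jumpRate (a : ℝ) (E : (Fin N → Bool) → ℝ) (x z : Fin N → Bool) : ℝ :=
  if nbr x z then Real.exp (a * (E x + E z)) else 0

theorem jumpRate_comm (x z : Fin N → Bool) : jumpRate a E x z = jumpRate a E z x := by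
  simp only [jumpRate, nbr_comm (x := x), add_comm (E x)]

theorem gen_eq_weightedLaplacian : gen N a E = weightedLaplacian (jumpRate a E) := by
  ext x z
  by_cases h : x = z
  · subst h
    simp [gen, weightedLaplacian, jumpRate, not_nbr_self]
  · simp [gen, weightedLaplacian, jumpRate, h]

theorem cubeEnergy_le_of_nonneg (ha : 0 ≤ a) (hE : ∀ x, 0 ≤ E x) (w : (Fin N → Bool) → ℝ) :
    cubeEnergy w ≤ ∑ x, ∑ z, jumpRate a E x z * (w x - w z) ^ 2 := by
  refine Finset.sum_le_sum fun x _ => Finset.sum_le_sum fun z _ => ?_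
  unfold jumpRate
  split_ifs
  · exact le_mul_of_one_le_left (sq_nonneg _)
      (Real.one_le_exp (mul_nonneg ha (add_nonneg (hE x) (hE z))))
  · simp

theorem gen_spectral_gap (ha : 0 ≤ a) (hE : ∀ x, 0 ≤ E x) (w : (Fin N → Bool) → ℝ)
    (hw : ∑ x, w x = 0) : 2 * ∑ x, w x ^ 2 ≤ -(w ⬝ᵥ gen N a E *ᵥ w) := by
  rw [gen_eq_weightedLaplacian, neg_dotProduct_weightedLaplacian_mulVec jumpRate_comm]
  have hP := cube_poincare w
  rw [hw] at hP
  have h2N : (0 : ℝ) < 2 ^ N := by positivity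
  have : 4 * ∑ x, w x ^ 2 ≤ cubeEnergy w := by nlinarith
  linarith [cubeEnergy_le_of_nonneg ha hE w]

theorem isHermitian_gen : (gen N a E).IsHermitian :=
  gen_eq_weightedLaplacian ▸ isHermitian_weightedLaplacian jumpRate_comm

theorem gen_mulVec_one : gen N a E *ᵥ 1 = 0 :=
  gen_eq_weightedLaplacian ▸ weightedLaplacian_mulVec_one _

theorem exp_smul_gen_apply_self_le (ha : 0 ≤ a) (hE : ∀ x, 0 ≤ E x) {s : ℝ} (hs : 0 ≤ s)
    (y : Fin N → Bool) :
    NormedSpace.exp (s • gen N a E) y y ≤ 1 / 2 ^ N + Real.exp (-(2 * s)) := by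
  simpa using isHermitian_gen.exp_smul_apply_self_le_of_gap gen_mulVec_one two_pos
    (gen_spectral_gap ha hE) hs y

end Generator

theorem integral_exp_neg_mul_Ioi_zero {b : ℝ} (hb : 0 < b) :
    ∫ s in Set.Ioi (0 : ℝ), Real.exp (-b * s) = b⁻¹ := by
  simpa [neg_div_neg_eq, one_div] using integral_exp_mul_Ioi (neg_neg_of_pos hb) 0

theorem setIntegral_exp_neg_div_mul_le {f : ℝ → ℝ} {c γ t : ℝ} (hγ : 0 ≤ γ) (ht : 0 < t)
    (hf₀ : ∀ s ∈ Set.Ioi (0 : ℝ), 0 ≤ f s)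
    (hf : ∀ s ∈ Set.Ioi (0 : ℝ), f s ≤ c + Real.exp (-(γ * s))) :
    ∫ s in Set.Ioi (0 : ℝ), Real.exp (-s / t) * f s ≤ t * c + t / (1 + γ * t) := by
  have hb₁ : 0 < t⁻¹ := inv_pos.2 ht
  have hb₂ : 0 < t⁻¹ + γ := by positivity
  have hint₁ := (exp_neg_integrableOn_Ioi 0 hb₁).const_mul c
  have hint₂ := exp_neg_integrableOn_Ioi 0 hb₂
  have hmajorant : ∀ s ∈ Set.Ioi (0 : ℝ),
      Real.exp (-s / t) * f s ≤ c * Real.exp (-t⁻¹ * s) + Real.exp (-(t⁻¹ + γ) * s) :=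
    fun s hs => calc
      Real.exp (-s / t) * f s ≤ Real.exp (-s / t) * (c + Real.exp (-(γ * s))) :=
        mul_le_mul_of_nonneg_left (hf s hs) (Real.exp_pos _).le
      _ = _ := by
        rw [mul_add, ← Real.exp_add]
        ring_nf
  refine (setIntegral_mono_of_nonneg (fun s hs => mul_nonneg (Real.exp_pos _).le (hf₀ s hs))
    hmajorant (hint₁.add hint₂)).trans_eq ?_
  rw [integral_add hint₁ hint₂, integral_const_mul, integral_exp_neg_mul_Ioi_zero hb₁,
    integral_exp_neg_mul_Ioi_zero hb₂]
  field_simp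

theorem stmt14_general (N : ℕ) (a : ℝ) (ha : 0 ≤ a)
    (E : (Fin N → Bool) → ℝ) (hE : ∀ x, 0 ≤ E x) (y : Fin N → Bool) (t : ℝ) (ht : 0 < t) :
    (∫ s in Set.Ioi (0 : ℝ),
        Real.exp (-s / t) * (NormedSpace.exp (s • gen N a E)) y y) ≤
        t * (1 / 2 ^ N) + t / (1 + 2 * t) ∧
      (t * (1 / 2 ^ N) ≤ 1 / 2 →
        (∫ s in Set.Ioi (0 : ℝ),
          Real.exp (-s / t) * (NormedSpace.exp (s • gen N a E)) y y) ≤ 1) := by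
  have hgreen := setIntegral_exp_neg_div_mul_le zero_le_two ht
    (fun s _ => isHermitian_gen.exp_smul_apply_self_nonneg s y)
    (fun s hs => exp_smul_gen_apply_self_le ha hE (le_of_lt hs) y)
  refine ⟨hgreen, fun hsmall => hgreen.trans ?_⟩
  have : t / (1 + 2 * t) ≤ 1 / 2 := by
    rw [div_le_iff₀ (by positivity)]
    linarith
  linarith

/-- Upper bound on the diagonal Green function with killing rate `1/t`. -/
theorem stmt14 (N : ℕ) (hN : 1 ≤ N) (a : ℝ) (ha : 0 ≤ a)
    (E : (Fin N → Bool) → ℝ) (hE : ∀ x, 0 ≤ E x) (y : Fin N → Bool) (t : ℝ) (ht : 0 < t) :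
    (∫ s in Set.Ioi (0 : ℝ),
        Real.exp (-s / t) * (NormedSpace.exp (s • gen N a E)) y y) ≤
        t * (1 / 2 ^ N) + t / (1 + 2 * t) ∧
      (t * (1 / 2 ^ N) ≤ 1 / 2 →
        (∫ s in Set.Ioi (0 : ℝ),
          Real.exp (-s / t) * (NormedSpace.exp (s • gen N a E)) y y) ≤ 1) :=
  stmt14_general N a ha E hE y t ht
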